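/- arXiv:2601.17051 — 2 statements merged into one kernel-verified Lean document; each statement's English description precedes it below -/
import Mathlib

section
/- Let n ≥ 2, let U ⊆ ℝ^{2n+1} be open, and let η, ξ, Φ, ω, f be smooth on U, where η is a nowhere-vanishing differential 1-form, ξ is a vector field with η(ξ) = 1 at every point, Φ is a differential 2-form with Φ(ξ, ·) = 0 at every point and such that at each point p the restriction of Φ_p to ker η_p is nondegenerate, ω is a closed differential 1-form, and f : U → ℝ. If dη = ω ∧ η and dΦ = 2f η ∧ Φ + 2ω ∧ Φ on U, then there is a smooth function λ : U → ℝ with df + f ω = λ η; equivalently, (df + f ω)_p vanishes on ker η_p for every p ∈ U. -/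
open scoped TensorProduct

/-- Wedge product of real-valued alternating forms (shuffle/determinant convention). -/
noncomputable def wedge {E : Type*} [AddCommGroup E] [Module ℝ E] {k l : ℕ}
    (α : E [⋀^Fin k]→ₗ[ℝ] ℝ) (β : E [⋀^Fin l]→ₗ[ℝ] ℝ) :
    E [⋀^Fin (k + l)]→ₗ[ℝ] ℝ :=
  AlternatingMap.domDomCongr finSumFinEquiv
    ((TensorProduct.lid ℝ ℝ).toLinearMap.compAlternatingMap (α.domCoprod β))

/-- A linear functional regarded as an alternating `1`-form. -/
noncomputable def oneForm {E : Type*} [AddCommGroup E] [Module ℝ E]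
    (α : E →ₗ[ℝ] ℝ) : E [⋀^Fin 1]→ₗ[ℝ] ℝ :=
  AlternatingMap.ofSubsingleton ℝ E ℝ 0 α

/-- A differential `k`-form (a family of alternating `k`-forms) is smooth on `U`
if all of its scalar evaluations on constant tuples of vectors are smooth on `U`. -/
def SmoothFormOn {E : Type*} [NormedAddCommGroup E] [NormedSpace ℝ E] {k : ℕ}
    (U : Set E) (θ : E → (E [⋀^Fin k]→ₗ[ℝ] ℝ)) : Prop :=
  ∀ v : Fin k → E, ContDiffOn ℝ (⊤ : ℕ∞) (fun p => θ p v) U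

/-- The exterior derivative of a differential `k`-form on `U`, evaluated at `p` on the
vectors `v` : `(dθ)_p(v₀,…,v_k) = ∑ i, (-1)^i ∂_{v i} (q ↦ θ_q(v₀,…,v̂ᵢ,…,v_k)) (p)`,
i.e. the alternatization of the Fréchet derivative of `θ`. -/
noncomputable def extDer {E : Type*} [NormedAddCommGroup E] [NormedSpace ℝ E] {k : ℕ}
    (U : Set E) (θ : E → (E [⋀^Fin k]→ₗ[ℝ] ℝ)) (p : E) (v : Fin (k + 1) → E) : ℝ :=
  ∑ i : Fin (k + 1), (-1 : ℝ) ^ (i : ℕ) *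
    fderivWithin ℝ (fun q => θ q (fun j => v (i.succAbove j))) U p (v i)

section Aux

variable {E : Type*} [AddCommGroup E] [Module ℝ E]

private lemma swap2 (β : E [⋀^Fin 2]→ₗ[ℝ] ℝ) (x y : E) : β ![y, x] = - β ![x, y] := by
  have h := β.map_swap ![x, y] (show (0:Fin 2) ≠ 1 by decide)
  have e : (![x,y] ∘ Equiv.swap (0:Fin 2) 1) = ![y,x] := by
    funext j; fin_cases j <;> rfl
  rw [e] at h; exact h

private lemma two_mul_wedge12 (α : E [⋀^Fin 1]→ₗ[ℝ] ℝ) (β : E [⋀^Fin 2]→ₗ[ℝ] ℝ)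
    (v : Fin 3 → E) :
    (2:ℝ) * wedge α β v =
      ∑ σ : Equiv.Perm (Fin 3), ((Equiv.Perm.sign σ : ℤ) : ℝ) *
        (α ![v (σ 0)] * β ![v (σ 1), v (σ 2)]) := by
  have h := MultilinearMap.domCoprod_alternization_eq (R' := ℝ) (Mᵢ := E) (N₁ := ℝ) (N₂ := ℝ) α β
  set w : (Fin 1 ⊕ Fin 2) → E := v ∘ finSumFinEquiv with hw
  set L : (ℝ ⊗[ℝ] ℝ) →ₗ[ℝ] ℝ := (TensorProduct.lid ℝ ℝ).toLinearMap with hL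
  have h2 : MultilinearMap.alternatization
      (MultilinearMap.domCoprod (α : MultilinearMap ℝ (fun _ : Fin 1 => E) ℝ)
        (β : MultilinearMap ℝ (fun _ : Fin 2 => E) ℝ)) w = (2 : ℕ) • (α.domCoprod β) w := by
    rw [h]; norm_num
  rw [MultilinearMap.alternatization_apply] at h2
  have hwedge : wedge α β v = L ((α.domCoprod β) w) := rfl
  have h3 := congrArg L h2
  rw [two_smul, map_add, map_sum] at h3
  have h4 : (2:ℝ) * wedge α β v = ∑ σ : Equiv.Perm (Fin 1 ⊕ Fin 2),
      L (Equiv.Perm.sign σ • (MultilinearMap.domDomCongr σ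
        ((α : MultilinearMap ℝ (fun _ : Fin 1 => E) ℝ).domCoprod
         (β : MultilinearMap ℝ (fun _ : Fin 2 => E) ℝ)) w)) := by
    rw [h3, hwedge]; ring
  rw [h4]
  rw [← Fintype.sum_equiv (Equiv.permCongr finSumFinEquiv)
    (fun σ' : Equiv.Perm (Fin 1 ⊕ Fin 2) =>
      ((Equiv.Perm.sign (Equiv.permCongr finSumFinEquiv σ') : ℤ) : ℝ) *
        (α ![v ((Equiv.permCongr finSumFinEquiv σ') 0)] *
          β ![v (Equiv.permCongr finSumFinEquiv σ' 1), v (Equiv.permCongr finSumFinEquiv σ' 2)]))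
    _ (fun σ => rfl)]
  apply Finset.sum_congr rfl
  intro σ _
  rw [MultilinearMap.domDomCongr_apply, MultilinearMap.domCoprod_apply]
  rw [Equiv.Perm.sign_permCongr]
  have e1 : (fun i => w (σ (Sum.inl i))) = ![v (Equiv.permCongr finSumFinEquiv σ 0)] := by
    funext j; fin_cases j; rfl
  have e2 : (fun i => w (σ (Sum.inr i))) =
      ![v (Equiv.permCongr finSumFinEquiv σ 1), v (Equiv.permCongr finSumFinEquiv σ 2)] := by
    funext j; fin_cases j <;> rfl
  rw [e1, e2]
  generalize Equiv.Perm.sign σ = s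
  rcases Int.units_eq_one_or s with hs | hs <;>
    simp [hs, hL, TensorProduct.lid_tmul]

private lemma wedge12_apply (α : E [⋀^Fin 1]→ₗ[ℝ] ℝ) (β : E [⋀^Fin 2]→ₗ[ℝ] ℝ) (x y z : E) :
    wedge α β ![x, y, z] =
      α ![x] * β ![y, z] - α ![y] * β ![x, z] + α ![z] * β ![x, y] := by
  have h := two_mul_wedge12 α β ![x,y,z]
  rw [show (Finset.univ : Finset (Equiv.Perm (Fin 3))) =
    {1, Equiv.swap 0 1, Equiv.swap 0 2, Equiv.swap 1 2,
     Equiv.swap 0 1 * Equiv.swap 1 2, Equiv.swap 1 2 * Equiv.swap 0 1} from by decide] at h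
  repeat rw [Finset.sum_insert (by decide)] at h
  rw [Finset.sum_singleton] at h
  have s1 : (Equiv.swap (0:Fin 3) 1) 2 = 2 := by decide
  have s2 : (Equiv.swap (0:Fin 3) 2) 1 = 1 := by decide
  have s3 : (Equiv.swap (1:Fin 3) 2) 0 = 0 := by decide
  have s4 : (Equiv.swap (0:Fin 3) 1) 0 = 1 := by decide
  have s5 : (Equiv.swap (1:Fin 3) 2) 1 = 2 := by decide
  norm_num [Equiv.Perm.sign_swap, Equiv.swap_apply_left, Equiv.swap_apply_right,
    s1, s2, s3, s4, s5, Matrix.cons_val_zero, Matrix.cons_val_one, Matrix.head_cons,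
    show ((0:Fin 3) = 2) = False from by decide, show ((1:Fin 3) = 2) = False from by decide,
    Matrix.cons_val_two, Matrix.tail_cons] at h
  have hxz := swap2 β x z
  have hyz := swap2 β y z
  have hxy := swap2 β x y
  rw [hxz, hyz, hxy] at h
  linarith

private lemma wedge11_apply (α : E [⋀^Fin 1]→ₗ[ℝ] ℝ) (β : E [⋀^Fin 1]→ₗ[ℝ] ℝ) (x y : E) :
    wedge α β ![x, y] = α ![x] * β ![y] - α ![y] * β ![x] := by
  have h := MultilinearMap.domCoprod_alternization_eq (R' := ℝ) (Mᵢ := E) (N₁ := ℝ) (N₂ := ℝ) α β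
  set v : Fin 2 → E := ![x, y] with hv
  set w : (Fin 1 ⊕ Fin 1) → E := v ∘ finSumFinEquiv with hw
  set L : (ℝ ⊗[ℝ] ℝ) →ₗ[ℝ] ℝ := (TensorProduct.lid ℝ ℝ).toLinearMap with hL
  have h2 : MultilinearMap.alternatization
      (MultilinearMap.domCoprod (α : MultilinearMap ℝ (fun _ : Fin 1 => E) ℝ)
        (β : MultilinearMap ℝ (fun _ : Fin 1 => E) ℝ)) w = (α.domCoprod β) w := by
    rw [h]; norm_num
  rw [MultilinearMap.alternatization_apply] at h2
  have hwedge : wedge α β v = L ((α.domCoprod β) w) := rfl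
  have h3 := congrArg L h2
  rw [map_sum] at h3
  rw [hwedge, ← h3]
  have hterm : ∀ σ : Equiv.Perm (Fin 1 ⊕ Fin 1),
      L (Equiv.Perm.sign σ • (MultilinearMap.domDomCongr σ
        ((α : MultilinearMap ℝ (fun _ : Fin 1 => E) ℝ).domCoprod
         (β : MultilinearMap ℝ (fun _ : Fin 1 => E) ℝ)) w)) =
      ((Equiv.Perm.sign (Equiv.permCongr finSumFinEquiv σ) : ℤ) : ℝ) *
        (α ![v ((Equiv.permCongr finSumFinEquiv σ) 0)] *
          β ![v (Equiv.permCongr finSumFinEquiv σ 1)]) := by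
    intro σ
    rw [MultilinearMap.domDomCongr_apply, MultilinearMap.domCoprod_apply,
      Equiv.Perm.sign_permCongr]
    have e1 : (fun i => w (σ (Sum.inl i))) = ![v (Equiv.permCongr finSumFinEquiv σ 0)] := by
      funext j; fin_cases j; rfl
    have e2 : (fun i => w (σ (Sum.inr i))) = ![v (Equiv.permCongr finSumFinEquiv σ 1)] := by
      funext j; fin_cases j; rfl
    rw [e1, e2]
    generalize Equiv.Perm.sign σ = s
    rcases Int.units_eq_one_or s with hs | hs <;> simp [hs, hL, TensorProduct.lid_tmul]
  rw [Finset.sum_congr rfl (fun σ _ => hterm σ)]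
  rw [Equiv.sum_comp (Equiv.permCongr finSumFinEquiv)
    (fun τ : Equiv.Perm (Fin (1+1)) =>
      ((Equiv.Perm.sign τ : ℤ) : ℝ) * (α ![v (τ 0)] * β ![v (τ 1)]))]
  rw [show (Finset.univ : Finset (Equiv.Perm (Fin (1+1)))) = {1, Equiv.swap 0 1} from by decide,
    Finset.sum_insert (by decide), Finset.sum_singleton]
  norm_num [Equiv.Perm.sign_swap, Equiv.swap_apply_left, Equiv.swap_apply_right, hv]
  ring

/-- The evaluation of a `1`-form on a single vector, as a linear map. -/
private def oneEval (θ : E [⋀^Fin 1]→ₗ[ℝ] ℝ) : E →ₗ[ℝ] ℝ where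
  toFun x := θ ![x]
  map_add' x y := by
    have h : ∀ z : E, ![z] = Function.update (![x] : Fin 1 → E) 0 z := by
      intro z; funext j; fin_cases j; simp
    show θ ![x + y] = θ ![x] + θ ![y]
    rw [h (x + y), h x, h y]
    simp only [Function.update_idem]
    exact θ.map_update_add _ 0 x y
  map_smul' c x := by
    have h : ∀ z : E, ![z] = Function.update (![x] : Fin 1 → E) 0 z := by
      intro z; funext j; fin_cases j; simp
    show θ ![c • x] = c • θ ![x]
    rw [h (c • x), h x]
    simp only [Function.update_idem]
    exact θ.map_update_smul _ 0 c x

@[simp] private lemma oneEval_apply (θ : E [⋀^Fin 1]→ₗ[ℝ] ℝ) (x : E) :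
    oneEval θ x = θ ![x] := rfl

/-- Evaluation of a `2`-form in its first slot, as a linear map. -/
private def twoEvalL (θ : E [⋀^Fin 2]→ₗ[ℝ] ℝ) (z : E) : E →ₗ[ℝ] ℝ where
  toFun x := θ ![x, z]
  map_add' x y := by
    have h : ∀ w : E, ![w, z] = Function.update (![x, z] : Fin 2 → E) 0 w := by
      intro w; funext j; fin_cases j <;> simp
    show θ ![x + y, z] = θ ![x, z] + θ ![y, z]
    rw [h (x + y), h x, h y]
    simp only [Function.update_idem]
    exact θ.map_update_add _ 0 x y
  map_smul' c x := by
    have h : ∀ w : E, ![w, z] = Function.update (![x, z] : Fin 2 → E) 0 w := by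
      intro w; funext j; fin_cases j <;> simp
    show θ ![c • x, z] = c • θ ![x, z]
    rw [h (c • x), h x]
    simp only [Function.update_idem]
    exact θ.map_update_smul _ 0 c x

@[simp] private lemma twoEvalL_apply (θ : E [⋀^Fin 2]→ₗ[ℝ] ℝ) (z x : E) :
    twoEvalL θ z x = θ ![x, z] := rfl

end Aux

section AuxNormed

variable {E : Type*} [NormedAddCommGroup E] [NormedSpace ℝ E]

private lemma schwarz {U : Set E} (hU : IsOpen U) {g : E → ℝ} (hg : ContDiffOn ℝ (⊤ : ℕ∞) g U)
    {p : E} (hp : p ∈ U) (u v : E) :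
    fderivWithin ℝ (fun q => fderivWithin ℝ g U q v) U p u =
    fderivWithin ℝ (fun q => fderivWithin ℝ g U q u) U p v := by
  have hat : ContDiffAt ℝ (⊤ : ℕ∞) g p := hg.contDiffAt (hU.mem_nhds hp)
  have hsymm : IsSymmSndFDerivAt ℝ g p := by
    apply ContDiffAt.isSymmSndFDerivAt hat
    rw [minSmoothness_of_isRCLikeNormedField]
    exact WithTop.coe_le_coe.mpr le_top
  have hev : ∀ z : E, (fun q => fderivWithin ℝ g U q z) =ᶠ[nhds p] (fun q => fderiv ℝ g q z) := by
    intro z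
    filter_upwards [hU.mem_nhds hp] with q hq
    rw [fderivWithin_of_isOpen hU hq]
  have hkey : ∀ z w : E, fderivWithin ℝ (fun q => fderivWithin ℝ g U q z) U p w
      = fderiv ℝ (fderiv ℝ g) p w z := by
    intro z w
    rw [Filter.EventuallyEq.fderivWithin_eq ((hev z).filter_mono nhdsWithin_le_nhds)
      (by rw [fderivWithin_of_isOpen hU hp])]
    rw [fderivWithin_of_isOpen hU hp]
    have hdiff : DifferentiableAt ℝ (fderiv ℝ g) p :=
      (hat.fderiv_right (m := (⊤ : ℕ∞)) (by simp)).differentiableAt (by simp)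
    rw [fderiv_clm_apply hdiff (differentiableAt_const z)]
    simp
  rw [hkey v u, hkey u v]
  exact hsymm u v

private lemma extDer1_apply (U : Set E) (θ : E → (E [⋀^Fin 1]→ₗ[ℝ] ℝ)) (q : E) (x y : E) :
    extDer U θ q ![x, y] =
      fderivWithin ℝ (fun r => θ r ![y]) U q x - fderivWithin ℝ (fun r => θ r ![x]) U q y := by
  rw [extDer, Fin.sum_univ_two]
  have e0 : (fun j : Fin 1 => ![x, y] ((0 : Fin 2).succAbove j)) = ![y] := by
    funext j; fin_cases j; rfl
  have e1 : (fun j : Fin 1 => ![x, y] ((1 : Fin 2).succAbove j)) = ![x] := by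
    funext j; fin_cases j; rfl
  rw [e0, e1]
  norm_num
  ring

private lemma extDer2_apply (U : Set E) (θ : E → (E [⋀^Fin 2]→ₗ[ℝ] ℝ)) (q : E) (x y z : E) :
    extDer U θ q ![x, y, z] =
      fderivWithin ℝ (fun r => θ r ![y, z]) U q x
      - fderivWithin ℝ (fun r => θ r ![x, z]) U q y
      + fderivWithin ℝ (fun r => θ r ![x, y]) U q z := by
  rw [extDer, Fin.sum_univ_three]
  have e0 : (fun j : Fin 2 => ![x, y, z] ((0 : Fin 3).succAbove j)) = ![y, z] := by
    funext j; fin_cases j <;> rfl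
  have e1 : (fun j : Fin 2 => ![x, y, z] ((1 : Fin 3).succAbove j)) = ![x, z] := by
    funext j; fin_cases j <;> rfl
  have e2 : (fun j : Fin 2 => ![x, y, z] ((2 : Fin 3).succAbove j)) = ![x, y] := by
    funext j; fin_cases j <;> rfl
  rw [e0, e1, e2]
  norm_num
  ring
  rfl

private lemma d_squared {U : Set E} (hU : IsOpen U) {Φ : E → (E [⋀^Fin 2]→ₗ[ℝ] ℝ)}
    (hΦs : SmoothFormOn U Φ) {p : E} (hp : p ∈ U) (a b c d : E) :
    fderivWithin ℝ (fun q => extDer U Φ q ![b, c, d]) U p a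
    - fderivWithin ℝ (fun q => extDer U Φ q ![a, c, d]) U p b
    + fderivWithin ℝ (fun q => extDer U Φ q ![a, b, d]) U p c
    - fderivWithin ℝ (fun q => extDer U Φ q ![a, b, c]) U p d = 0 := by
  have hud := hU.uniqueDiffOn (𝕜 := ℝ)
  have hD : ∀ v w : E, ContDiffOn ℝ (⊤ : ℕ∞) (fun q => fderivWithin ℝ (fun r => Φ r ![v, w]) U q) U :=
    fun v w => (hΦs ![v, w]).fderivWithin hud (by simp)
  have hDz : ∀ v w z : E, DifferentiableWithinAt ℝ
      (fun q => fderivWithin ℝ (fun r => Φ r ![v, w]) U q z) U p :=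
    fun v w z => (((hD v w).clm_apply contDiffOn_const).differentiableOn (by simp)) p hp
  have expand : ∀ x y z u : E,
      fderivWithin ℝ (fun q => extDer U Φ q ![x, y, z]) U p u =
      fderivWithin ℝ (fun q => fderivWithin ℝ (fun r => Φ r ![y, z]) U q x) U p u
      - fderivWithin ℝ (fun q => fderivWithin ℝ (fun r => Φ r ![x, z]) U q y) U p u
      + fderivWithin ℝ (fun q => fderivWithin ℝ (fun r => Φ r ![x, y]) U q z) U p u := by
    intro x y z u
    have hfun : (fun q => extDer U Φ q ![x, y, z]) =
        fun q => (fderivWithin ℝ (fun r => Φ r ![y, z]) U q x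
          - fderivWithin ℝ (fun r => Φ r ![x, z]) U q y)
          + fderivWithin ℝ (fun r => Φ r ![x, y]) U q z := by
      funext q; rw [extDer2_apply]
    rw [hfun, fderivWithin_fun_add (hud p hp) ((hDz y z x).fun_sub (hDz x z y)) (hDz x y z),
      fderivWithin_fun_sub (hud p hp) (hDz y z x) (hDz x z y)]
    rfl
  rw [expand, expand, expand, expand]
  rw [schwarz hU (hΦs ![c,d]) hp a b, schwarz hU (hΦs ![b,d]) hp a c,
    schwarz hU (hΦs ![b,c]) hp a d, schwarz hU (hΦs ![a,d]) hp b c,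
    schwarz hU (hΦs ![a,c]) hp b d, schwarz hU (hΦs ![a,b]) hp c d]
  ring

end AuxNormed

set_option maxHeartbeats 2000000 in
/-- On an open `U ⊆ ℝ^(2n+1)`, `n ≥ 2`, with smooth data: `η` a
nowhere-vanishing 1-form, `ξ` a vector field with `η(ξ) = 1`, `Φ` a 2-form with
`Φ(ξ,·) = 0` nondegenerate on `ker η`, `ω` a closed 1-form and `f` smooth.  If
`dη = ω ∧ η` and `dΦ = 2f η ∧ Φ + 2ω ∧ Φ` on `U`, then `df + f ω = λ η` for a
smooth function `λ` on `U`. -/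
theorem df_add_f_omega_proportional_eta (n : ℕ) (hn : 2 ≤ n)
    (U : Set (Fin (2 * n + 1) → ℝ)) (hU : IsOpen U)
    (η : (Fin (2 * n + 1) → ℝ) → ((Fin (2 * n + 1) → ℝ) [⋀^Fin 1]→ₗ[ℝ] ℝ))
    (hηs : SmoothFormOn U η) (hη0 : ∀ p ∈ U, η p ≠ 0)
    (ξ : (Fin (2 * n + 1) → ℝ) → (Fin (2 * n + 1) → ℝ))
    (hξs : ContDiffOn ℝ (⊤ : ℕ∞) ξ U) (hηξ : ∀ p ∈ U, η p ![ξ p] = 1)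
    (Φ : (Fin (2 * n + 1) → ℝ) → ((Fin (2 * n + 1) → ℝ) [⋀^Fin 2]→ₗ[ℝ] ℝ))
    (hΦs : SmoothFormOn U Φ)
    (hΦξ : ∀ p ∈ U, ∀ X, Φ p ![ξ p, X] = 0)
    (hnd : ∀ p ∈ U, ∀ X, η p ![X] = 0 → X ≠ 0 → ∃ Y, η p ![Y] = 0 ∧ Φ p ![X, Y] ≠ 0)
    (ω : (Fin (2 * n + 1) → ℝ) → ((Fin (2 * n + 1) → ℝ) [⋀^Fin 1]→ₗ[ℝ] ℝ))
    (hωs : SmoothFormOn U ω)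
    (hdω : ∀ p ∈ U, ∀ v : Fin 2 → (Fin (2 * n + 1) → ℝ), extDer U ω p v = 0)
    (f : (Fin (2 * n + 1) → ℝ) → ℝ) (hf : ContDiffOn ℝ (⊤ : ℕ∞) f U)
    (hdη : ∀ p ∈ U, ∀ v : Fin 2 → (Fin (2 * n + 1) → ℝ),
      extDer U η p v = wedge (ω p) (η p) v)
    (hdΦ : ∀ p ∈ U, ∀ v : Fin 3 → (Fin (2 * n + 1) → ℝ),
      extDer U Φ p v = ((2 * f p) • wedge (η p) (Φ p) + (2 : ℝ) • wedge (ω p) (Φ p)) v) :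
    ∃ lam : (Fin (2 * n + 1) → ℝ) → ℝ, ContDiffOn ℝ (⊤ : ℕ∞) lam U ∧
      ∀ p ∈ U, ∀ X, fderivWithin ℝ f U p X + f p * ω p ![X] = lam p * η p ![X] := by

  classical
  have hud := hU.uniqueDiffOn (𝕜 := ℝ)
  -- Step 1: the key vanishing on the kernel of η
  have key : ∀ p ∈ U, ∀ X, η p ![X] = 0 →
      fderivWithin ℝ f U p X + f p * ω p ![X] = 0 := by
    intro p hp
    -- structure equations at p
    have E1 : ∀ x y : Fin (2 * n + 1) → ℝ,
        fderivWithin ℝ (fun q => η q ![y]) U p x =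
        fderivWithin ℝ (fun q => η q ![x]) U p y
          + (ω p ![x] * η p ![y] - ω p ![y] * η p ![x]) := by
      intro x y
      have h := hdη p hp ![x, y]
      rw [extDer1_apply, wedge11_apply] at h
      linarith
    have E2 : ∀ x y : Fin (2 * n + 1) → ℝ,
        fderivWithin ℝ (fun q => ω q ![y]) U p x =
        fderivWithin ℝ (fun q => ω q ![x]) U p y := by
      intro x y
      have h := hdω p hp ![x, y]
      rw [extDer1_apply] at h
      linarith
    have E3 : ∀ x y z : Fin (2 * n + 1) → ℝ,
        fderivWithin ℝ (fun q => Φ q ![y, z]) U p x =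
        fderivWithin ℝ (fun q => Φ q ![x, z]) U p y
        - fderivWithin ℝ (fun q => Φ q ![x, y]) U p z
        + (2 * f p * (η p ![x] * Φ p ![y, z] - η p ![y] * Φ p ![x, z] + η p ![z] * Φ p ![x, y])
          + 2 * (ω p ![x] * Φ p ![y, z] - ω p ![y] * Φ p ![x, z] + ω p ![z] * Φ p ![x, y])) := by
      intro x y z
      have h := hdΦ p hp ![x, y, z]
      rw [extDer2_apply] at h
      simp only [AlternatingMap.add_apply, AlternatingMap.smul_apply, smul_eq_mul,
        wedge12_apply] at h
      linarith
    -- basic HasFDerivWithinAt facts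
    have Hf : HasFDerivWithinAt f (fderivWithin ℝ f U p) U p :=
      ((hf.differentiableOn (by simp)) p hp).hasFDerivWithinAt
    have Hηv : ∀ v, HasFDerivWithinAt (fun q => η q ![v])
        (fderivWithin ℝ (fun q => η q ![v]) U p) U p :=
      fun v => (((hηs ![v]).differentiableOn (by simp)) p hp).hasFDerivWithinAt
    have Hωv : ∀ v, HasFDerivWithinAt (fun q => ω q ![v])
        (fderivWithin ℝ (fun q => ω q ![v]) U p) U p :=
      fun v => (((hωs ![v]).differentiableOn (by simp)) p hp).hasFDerivWithinAt
    have HΦvw : ∀ v w, HasFDerivWithinAt (fun q => Φ q ![v, w])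
        (fderivWithin ℝ (fun q => Φ q ![v, w]) U p) U p :=
      fun v w => (((hΦs ![v, w]).differentiableOn (by simp)) p hp).hasFDerivWithinAt
    -- expansion of the derivative of dΦ's evaluation
    have expand : ∀ x y z u : Fin (2 * n + 1) → ℝ,
        fderivWithin ℝ (fun q => extDer U Φ q ![x, y, z]) U p u =
        2 * fderivWithin ℝ f U p u *
            (η p ![x] * Φ p ![y, z] - η p ![y] * Φ p ![x, z] + η p ![z] * Φ p ![x, y])
        + 2 * f p * (fderivWithin ℝ (fun q => η q ![x]) U p u * Φ p ![y, z]
            + η p ![x] * fderivWithin ℝ (fun q => Φ q ![y, z]) U p u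
            - fderivWithin ℝ (fun q => η q ![y]) U p u * Φ p ![x, z]
            - η p ![y] * fderivWithin ℝ (fun q => Φ q ![x, z]) U p u
            + fderivWithin ℝ (fun q => η q ![z]) U p u * Φ p ![x, y]
            + η p ![z] * fderivWithin ℝ (fun q => Φ q ![x, y]) U p u)
        + 2 * (fderivWithin ℝ (fun q => ω q ![x]) U p u * Φ p ![y, z]
            + ω p ![x] * fderivWithin ℝ (fun q => Φ q ![y, z]) U p u
            - fderivWithin ℝ (fun q => ω q ![y]) U p u * Φ p ![x, z]
            - ω p ![y] * fderivWithin ℝ (fun q => Φ q ![x, z]) U p u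
            + fderivWithin ℝ (fun q => ω q ![z]) U p u * Φ p ![x, y]
            + ω p ![z] * fderivWithin ℝ (fun q => Φ q ![x, y]) U p u) := by
      intro x y z u
      have hEq : Set.EqOn (fun q => extDer U Φ q ![x, y, z])
          (fun q => 2 * f q *
              (η q ![x] * Φ q ![y, z] - η q ![y] * Φ q ![x, z] + η q ![z] * Φ q ![x, y])
            + 2 * (ω q ![x] * Φ q ![y, z] - ω q ![y] * Φ q ![x, z]
                + ω q ![z] * Φ q ![x, y])) U := by
        intro q hq
        have h := hdΦ q hq ![x, y, z]
        simp only [AlternatingMap.add_apply, AlternatingMap.smul_apply, smul_eq_mul,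
          wedge12_apply] at h
        exact h.trans (by ring)
      rw [fderivWithin_congr hEq (hEq hp)]
      have HA := (((Hηv x).fun_mul (HΦvw y z)).fun_sub ((Hηv y).fun_mul (HΦvw x z))).fun_add
        ((Hηv z).fun_mul (HΦvw x y))
      have HB := (((Hωv x).fun_mul (HΦvw y z)).fun_sub ((Hωv y).fun_mul (HΦvw x z))).fun_add
        ((Hωv z).fun_mul (HΦvw x y))
      have HG := ((Hf.const_mul 2).fun_mul HA).fun_add (HB.const_mul 2)
      rw [HG.fderivWithin (hud p hp)]
      simp only [ContinuousLinearMap.add_apply, ContinuousLinearMap.coe_smul', Pi.smul_apply,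
        smul_eq_mul, ContinuousLinearMap.coe_sub', Pi.sub_apply, ContinuousLinearMap.smul_apply]
      ring
    -- the pointwise identity on kernel triples
    have identI : ∀ a b c : Fin (2 * n + 1) → ℝ,
        η p ![a] = 0 → η p ![b] = 0 → η p ![c] = 0 →
        (fderivWithin ℝ f U p a + f p * ω p ![a]) * Φ p ![b, c]
        - (fderivWithin ℝ f U p b + f p * ω p ![b]) * Φ p ![a, c]
        + (fderivWithin ℝ f U p c + f p * ω p ![c]) * Φ p ![a, b] = 0 := by
      intro a b c ha hb hc
      set d := ξ p with hd
      have hηd : η p ![d] = 1 := hηξ p hp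
      have hPda : Φ p ![a, d] = 0 := by
        have := hΦξ p hp a
        have hsw := swap2 (Φ p) d a
        rw [this] at hsw
        simpa using hsw
      have hPdb : Φ p ![b, d] = 0 := by
        have := hΦξ p hp b
        have hsw := swap2 (Φ p) d b
        rw [this] at hsw
        simpa using hsw
      have hPdc : Φ p ![c, d] = 0 := by
        have := hΦξ p hp c
        have hsw := swap2 (Φ p) d c
        rw [this] at hsw
        simpa using hsw
      have EQ := d_squared hU hΦs hp a b c d
      rw [expand b c d a, expand a c d b, expand a b d c, expand a b c d] at EQ
      rw [E1 a b, E1 a c, E1 a d, E1 b c, E1 b d, E1 c d] at EQ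
      rw [E2 a b, E2 a c, E2 a d, E2 b c, E2 b d, E2 c d] at EQ
      rw [E3 a b c, E3 a b d, E3 a c d, E3 b c d] at EQ
      rw [ha, hb, hc, hηd, hPda, hPdb, hPdc] at EQ
      linear_combination (1 / 2 : ℝ) * EQ
    -- nondegeneracy argument
    intro X hX
    by_contra hne
    set αl : (Fin (2 * n + 1) → ℝ) →ₗ[ℝ] ℝ :=
      (fderivWithin ℝ f U p : (Fin (2 * n + 1) → ℝ) →L[ℝ] ℝ).toLinearMap
        + f p • oneEval (ω p) with hαl
    have hαl_apply : ∀ Y, αl Y = fderivWithin ℝ f U p Y + f p * ω p ![Y] := by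
      intro Y
      simp [hαl, oneEval_apply, smul_eq_mul]
    have hAX : αl X ≠ 0 := by rw [hαl_apply]; exact hne
    set Z : Fin (2 * n + 1) → ℝ := (αl X)⁻¹ • X with hZ
    have hηZ : η p ![Z] = 0 := by
      have := (oneEval (η p)).map_smul (αl X)⁻¹ X
      simp only [oneEval_apply, smul_eq_mul] at this
      rw [hZ, this, hX, mul_zero]
    have hαZ : αl Z = 1 := by
      rw [hZ, map_smul, smul_eq_mul, inv_mul_cancel₀ hAX]
    set l : (Fin (2 * n + 1) → ℝ) →ₗ[ℝ] (Fin 3 → ℝ) :=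
      LinearMap.pi ![oneEval (η p), αl, twoEvalL (Φ p) Z] with hl
    have hW : ∃ W, l W = 0 ∧ W ≠ 0 := by
      by_contra h
      push_neg at h
      have hinj : Function.Injective l := by
        rw [← LinearMap.ker_eq_bot, Submodule.eq_bot_iff]
        intro W hWl
        exact h W hWl
      have hle := LinearMap.finrank_le_finrank_of_injective hinj
      rw [Module.finrank_fin_fun, Module.finrank_fin_fun] at hle
      omega
    obtain ⟨W, hWl, hWne⟩ := hW
    have hηW : η p ![W] = 0 := by
      have := congrFun (congrArg (fun g => (g : Fin 3 → ℝ)) hWl) 0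
      simpa [hl, LinearMap.pi_apply] using this
    have hαW : αl W = 0 := by
      have := congrFun (congrArg (fun g => (g : Fin 3 → ℝ)) hWl) 1
      simpa [hl, LinearMap.pi_apply] using this
    have hΦWZ : Φ p ![W, Z] = 0 := by
      have := congrFun (congrArg (fun g => (g : Fin 3 → ℝ)) hWl) 2
      simpa [hl, LinearMap.pi_apply] using this
    obtain ⟨Y, hηY, hΦWY⟩ := hnd p hp W hηW hWne
    set Y₀ : Fin (2 * n + 1) → ℝ := Y - (αl Y) • Z with hY₀
    have hηY₀ : η p ![Y₀] = 0 := by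
      have h1 := (oneEval (η p)).map_sub Y ((αl Y) • Z)
      have h2 := (oneEval (η p)).map_smul (αl Y) Z
      simp only [oneEval_apply, smul_eq_mul] at h1 h2
      rw [hY₀, h1, h2, hηY, hηZ, mul_zero, zero_sub, neg_zero]
    have hαY₀ : αl Y₀ = 0 := by
      rw [hY₀, map_sub, map_smul, smul_eq_mul, hαZ, mul_one, sub_self]
    have hI := identI W Y₀ Z hηW hηY₀ hηZ
    rw [← hαl_apply, ← hαl_apply, ← hαl_apply, hαW, hαY₀, hαZ] at hI
    have hΦWY₀ : Φ p ![W, Y₀] = 0 := by linear_combination hI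
    have h1 : Y = Y₀ + (αl Y) • Z := by rw [hY₀]; abel
    have h5 := (twoEvalL (Φ p) W).map_add Y₀ ((αl Y) • Z)
    have h6 := (twoEvalL (Φ p) W).map_smul (αl Y) Z
    simp only [twoEvalL_apply, smul_eq_mul] at h5 h6
    have h7 : Φ p ![Y, W] = Φ p ![Y₀, W] + (αl Y) * Φ p ![Z, W] := by
      conv_lhs => rw [h1]
      rw [h5, h6]
    have h8 := swap2 (Φ p) W Y
    have h9 := swap2 (Φ p) W Y₀
    have h10 := swap2 (Φ p) W Z
    apply hΦWY
    rw [h8, h9, h10] at h7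
    rw [hΦWY₀, hΦWZ] at h7
    linarith
  -- Step 2: define λ and check smoothness and the identity
  refine ⟨fun q => fderivWithin ℝ f U q (ξ q) + f q * ω q ![ξ q], ?_, ?_⟩
  · apply ContDiffOn.add
    · exact (hf.fderivWithin hud (by simp)).clm_apply hξs
    · apply hf.mul
      have hrw : ∀ q, ω q ![ξ q] = ∑ i : Fin (2 * n + 1), ξ q i *
          ω q ![fun j => if i = j then (1 : ℝ) else 0] := by
        intro q
        have hx : ξ q = ∑ i : Fin (2 * n + 1), ξ q i •
            (fun j => if i = j then (1 : ℝ) else 0) := pi_eq_sum_univ (ξ q)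
        calc ω q ![ξ q] = oneEval (ω q) (ξ q) := rfl
          _ = oneEval (ω q) (∑ i : Fin (2 * n + 1), ξ q i •
              (fun j => if i = j then (1 : ℝ) else 0)) := by rw [← hx]
          _ = ∑ i : Fin (2 * n + 1), ξ q i *
              ω q ![fun j => if i = j then (1 : ℝ) else 0] := by
            rw [map_sum]
            refine Finset.sum_congr rfl fun i _ => ?_
            rw [map_smul, smul_eq_mul, oneEval_apply]
      have : (fun q => ω q ![ξ q]) = fun q => ∑ i : Fin (2 * n + 1), ξ q i *
          ω q ![fun j => if i = j then (1 : ℝ) else 0] := funext hrw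
      rw [this]
      apply ContDiffOn.sum
      intro i _
      exact ((ContinuousLinearMap.proj i).contDiff.comp_contDiffOn hξs).mul
        (hωs ![fun j => if i = j then (1 : ℝ) else 0])
  · intro p hp X
    have hζ : η p ![ξ p] = 1 := hηξ p hp
    set c : ℝ := η p ![X] with hc
    have hX' : η p ![X - c • ξ p] = 0 := by
      have h1 := (oneEval (η p)).map_sub X (c • ξ p)
      have h2 := (oneEval (η p)).map_smul c (ξ p)
      simp only [oneEval_apply, smul_eq_mul] at h1 h2
      rw [h1, h2, hζ, mul_one, ← hc, sub_self]
    have h0 := key p hp (X - c • ξ p) hX'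
    have hF : fderivWithin ℝ f U p (X - c • ξ p) =
        fderivWithin ℝ f U p X - c * fderivWithin ℝ f U p (ξ p) := by
      rw [map_sub, map_smul, smul_eq_mul]
    have hO : ω p ![X - c • ξ p] = ω p ![X] - c * ω p ![ξ p] := by
      have h1 := (oneEval (ω p)).map_sub X (c • ξ p)
      have h2 := (oneEval (ω p)).map_smul c (ξ p)
      simp only [oneEval_apply, smul_eq_mul] at h1 h2
      rw [h1, h2]
    rw [hF, hO] at h0
    linear_combination h0
end

section
/- On ℝ⁵ with coordinates (x, y₁, y₂, z₁, z₂), let b : ℝ → ℝ be smooth and define the differential forms η = dz₁, Φ = −e^{z₁}(dx ∧ dy₁ + dz₂ ∧ dy₂), ω = b(z₁) dz₁, and the smooth function f = 1/2 − b(z₁). Then on all of ℝ⁵: dω = 0; dη = 0 = ω ∧ η; dΦ = 2f η ∧ Φ + 2ω ∧ Φ; df + f ω = λ η, where λ is the smooth function λ = −b′(z₁) + b(z₁)(1/2 − b(z₁)); and ω = b(z₁) η, so ω is pointwise proportional to η. Moreover, at every point where b(z₁) ≠ 0 one has dΦ ≠ 2f η ∧ Φ, so the structure is not almost generalized f-cosymplectic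 there. -/
open scoped TensorProduct

section WedgeEval
open Equiv TensorProduct

theorem wedge_eval {E : Type*} [AddCommGroup E] [Module ℝ E] {k l : ℕ}
    (a : E [⋀^Fin k]→ₗ[ℝ] ℝ) (b : E [⋀^Fin l]→ₗ[ℝ] ℝ) (v : Fin (k+l) → E) :
    ((k.factorial * l.factorial : ℕ) : ℝ) • wedge a b v =
      ∑ τ : Perm (Fin (k+l)), (Perm.sign τ : ℤ) •
        (a (fun i => v (τ (finSumFinEquiv (Sum.inl i)))) *
         b (fun i => v (τ (finSumFinEquiv (Sum.inr i))))) := by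
  have h := congrArg (fun F : E [⋀^(Fin k ⊕ Fin l)]→ₗ[ℝ] (ℝ ⊗[ℝ] ℝ) =>
      (TensorProduct.lid ℝ ℝ).toLinearMap (F (v ∘ finSumFinEquiv)))
      (MultilinearMap.domCoprod_alternization_eq a b)
  simp only [MultilinearMap.alternatization_apply, AlternatingMap.smul_apply,
    map_sum, Units.smul_def, map_zsmul, map_nsmul,
    MultilinearMap.domDomCongr_apply, MultilinearMap.domCoprod_apply,
    AlternatingMap.coe_multilinearMap, LinearEquiv.coe_coe, lid_tmul, smul_eq_mul,
    Fintype.card_fin] at h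
  have hw : wedge a b v = (TensorProduct.lid ℝ ℝ) ((a.domCoprod b) (v ∘ finSumFinEquiv)) := rfl
  rw [Nat.cast_smul_eq_nsmul, hw, ← h]
  refine Fintype.sum_equiv (finSumFinEquiv.permCongr) _ _ fun σ => ?_
  simp [Equiv.permCongr_apply, Function.comp]

theorem wedge_oneForm_oneForm {E : Type*} [AddCommGroup E] [Module ℝ E]
    (a b : E [⋀^Fin 1]→ₗ[ℝ] ℝ) (v : Fin 2 → E) :
    wedge a b v = a ![v 0] * b ![v 1] - a ![v 1] * b ![v 0] := by
  have e1 : ∀ c : Fin 1 → Fin 2, (fun i => v (c i)) = ![v (c 0)] := by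
    intro c; funext i; fin_cases i; rfl
  have h := wedge_eval a b v
  norm_num at h
  rw [Finset.univ_perm_fin_succ, Finset.sum_map, Fintype.sum_prod_type] at h
  simp only [Fin.sum_univ_succ, Finset.univ_unique, Finset.sum_singleton,
    Equiv.coe_toEmbedding, e1] at h
  norm_num [Equiv.Perm.decomposeFin.symm_sign, Fin.default_eq_zero,
    Equiv.Perm.decomposeFin_symm_apply_zero, Equiv.Perm.decomposeFin_symm_apply_succ,
    Equiv.swap_apply_def, Fin.succ_zero_eq_one] at h
  have d0 : (Equiv.Perm.decomposeFin.symm 1 : Perm (Fin 2)) (Fin.castAdd 1 0) = 1 := by decide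
  have d1 : (Equiv.Perm.decomposeFin.symm 1 : Perm (Fin 2)) 1 = 0 := by decide
  have ds : Equiv.Perm.sign (Equiv.Perm.decomposeFin.symm 1 : Perm (Fin 2)) = -1 := by decide
  have dc : (Fin.castAdd 1 0 : Fin 2) = 0 := rfl
  rw [dc, if_pos rfl] at h
  rw [h]; push_cast; ring

theorem wedge_oneForm_two {E : Type*} [AddCommGroup E] [Module ℝ E]
    (a : E [⋀^Fin 1]→ₗ[ℝ] ℝ) (Ψ : E [⋀^Fin 2]→ₗ[ℝ] ℝ) (v : Fin 3 → E) :
    wedge a Ψ v = a ![v 0] * Ψ ![v 1, v 2] - a ![v 1] * Ψ ![v 0, v 2]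
      + a ![v 2] * Ψ ![v 0, v 1] := by
  have e1 : ∀ c : Fin 1 → Fin 3, (fun i => v (c i)) = ![v (c 0)] := by
    intro c; funext i; fin_cases i; rfl
  have e2 : ∀ c : Fin 2 → Fin 3, (fun i => v (c i)) = ![v (c 0), v (c 1)] := by
    intro c; funext i; fin_cases i <;> rfl
  have h := wedge_eval a Ψ v
  norm_num at h
  simp only [Finset.univ_perm_fin_succ, Finset.sum_map, Fintype.sum_prod_type,
    Equiv.coe_toEmbedding] at h
  simp only [Fin.sum_univ_succ, Finset.univ_unique, Finset.sum_singleton,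
    Finset.sum_empty, e1, e2] at h
  have hd : (default : Equiv.Perm (Fin 1)) = 1 := Subsingleton.elim _ _
  have hd0 : (default : Equiv.Perm (Fin 0)) = 1 := Subsingleton.elim _ _
  norm_num [hd, hd0, Fin.default_eq_zero, Equiv.Perm.decomposeFin.symm_sign,
    Equiv.Perm.decomposeFin_symm_apply_zero, Equiv.Perm.decomposeFin_symm_apply_one,
    Equiv.Perm.decomposeFin_symm_apply_succ, Equiv.swap_apply_def,
    Fin.succ_zero_eq_one, Fin.castAdd, Fin.natAdd, Fin.castLE, Fin.ext_iff] at h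
  have A0 : (Equiv.Perm.decomposeFin.symm (0, Equiv.swap 0 1) : Equiv.Perm (Fin 3)) 2 = 1 := by decide
  have A1 : (Equiv.Perm.decomposeFin.symm (1, Equiv.swap 0 1) : Equiv.Perm (Fin 3)) 2 = 0 := by decide
  have A2 : (Equiv.Perm.decomposeFin.symm (2, Equiv.swap 0 1) : Equiv.Perm (Fin 3)) 2 = 1 := by decide
  have mk2 : ∀ hh : 2 < 3, (⟨2, hh⟩ : Fin 3) = 2 := fun _ => rfl
  have skew : ∀ x y : E, Ψ ![y, x] = - Ψ ![x, y] := by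
    intro x y
    have hs := Ψ.map_swap (i := 0) (j := 1) ![x, y] (by decide)
    have : (![x, y] ∘ Equiv.swap (0 : Fin 2) 1) = ![y, x] := by
      funext i; fin_cases i <;> simp [Equiv.swap_apply_def]
    rw [this] at hs
    exact hs
  simp only [mk2] at h
  rw [A0, A1, A2] at h
  rw [skew (v 1) (v 2), skew (v 0) (v 2), skew (v 0) (v 1)] at h
  linarith [h]

end WedgeEval

/-- The 1-form `η = dz₁` on `ℝ⁵` (coordinates `x = p 0`, `y₁ = p 1`, `y₂ = p 2`,
`z₁ = p 3`, `z₂ = p 4`). -/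
noncomputable def eta5 : (Fin 5 → ℝ) → ((Fin 5 → ℝ) [⋀^Fin 1]→ₗ[ℝ] ℝ) :=
  fun _ => oneForm (LinearMap.proj 3)

/-- The 2-form `Φ = -e^{z₁} (dx ∧ dy₁ + dz₂ ∧ dy₂)` on `ℝ⁵`. -/
noncomputable def Phi5 : (Fin 5 → ℝ) → ((Fin 5 → ℝ) [⋀^Fin 2]→ₗ[ℝ] ℝ) :=
  fun p => (-Real.exp (p 3)) •
    (wedge (oneForm (LinearMap.proj 0)) (oneForm (LinearMap.proj 1)) +
      wedge (oneForm (LinearMap.proj 4)) (oneForm (LinearMap.proj 2)))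

/-- The Lee form `ω = b(z₁) dz₁` on `ℝ⁵`. -/
noncomputable def omega5 (b : ℝ → ℝ) : (Fin 5 → ℝ) → ((Fin 5 → ℝ) [⋀^Fin 1]→ₗ[ℝ] ℝ) :=
  fun p => b (p 3) • oneForm (LinearMap.proj 3)

/-- The function `f = 1/2 - b(z₁)` on `ℝ⁵`. -/
noncomputable def f5 (b : ℝ → ℝ) : (Fin 5 → ℝ) → ℝ := fun p => 1 / 2 - b (p 3)

/-- The function `λ = -b'(z₁) + b(z₁) (1/2 - b(z₁))` on `ℝ⁵`. -/
noncomputable def lam5 (b : ℝ → ℝ) : (Fin 5 → ℝ) → ℝ :=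
  fun p => -deriv b (p 3) + b (p 3) * (1 / 2 - b (p 3))

-- helper evaluation lemmas
lemma oneForm_apply {E : Type*} [AddCommGroup E] [Module ℝ E]
    (α : E →ₗ[ℝ] ℝ) (w : Fin 1 → E) : oneForm α w = α (w 0) := rfl

lemma eta5_apply (p : Fin 5 → ℝ) (w : Fin 1 → Fin 5 → ℝ) : eta5 p w = w 0 3 := rfl

lemma omega5_apply (b : ℝ → ℝ) (p : Fin 5 → ℝ) (w : Fin 1 → Fin 5 → ℝ) :
    omega5 b p w = b (p 3) * w 0 3 := rfl

lemma Phi5_apply (p : Fin 5 → ℝ) (w : Fin 2 → Fin 5 → ℝ) :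
    Phi5 p w = -Real.exp (p 3) *
      ((w 0 0 * w 1 1 - w 1 0 * w 0 1) + (w 0 4 * w 1 2 - w 1 4 * w 0 2)) := by
  simp only [Phi5, AlternatingMap.smul_apply, AlternatingMap.add_apply,
    wedge_oneForm_oneForm, oneForm_apply, Matrix.cons_val_zero, LinearMap.proj_apply,
    smul_eq_mul]

/-- derivative of `q ↦ g (q 3)` -/
lemma fd_proj3 {g : ℝ → ℝ} {p : Fin 5 → ℝ} (hg : DifferentiableAt ℝ g (p 3))
    (X : Fin 5 → ℝ) :
    fderivWithin ℝ (fun q : Fin 5 → ℝ => g (q 3)) Set.univ p X = deriv g (p 3) * X 3 := by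
  rw [fderivWithin_univ]
  have h1 : HasFDerivAt (fun q : Fin 5 → ℝ => q 3)
      (ContinuousLinearMap.proj (R := ℝ) (φ := fun _ : Fin 5 => ℝ) 3) p := by
    exact (ContinuousLinearMap.proj (R := ℝ) (φ := fun _ : Fin 5 => ℝ) 3).hasFDerivAt (x := p)
  have h2 := hg.hasDerivAt.comp_hasFDerivAt p h1
  have h3 : HasFDerivAt (fun q : Fin 5 → ℝ => g (q 3))
      (deriv g (p 3) • ContinuousLinearMap.proj (R := ℝ) (φ := fun _ : Fin 5 => ℝ) 3) p := h2
  rw [h3.fderiv]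
  simp [mul_comm]

/-- With `η = dz₁`, `Φ = -e^{z₁}(dx ∧ dy₁ + dz₂ ∧ dy₂)`,
`ω = b(z₁) dz₁` and `f = 1/2 - b(z₁)` on `ℝ⁵` (`b` smooth): `dω = 0`,
`dη = 0 = ω ∧ η`, `dΦ = 2f η ∧ Φ + 2ω ∧ Φ`, `df + f ω = λ η` with
`λ = -b' + b(1/2 - b)`, `ω = b(z₁) η` is pointwise proportional to `η`, and wherever
`b(z₁) ≠ 0` one has `dΦ ≠ 2f η ∧ Φ`, so the structure is not almost generalized
`f`-cosymplectic there. -/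
theorem example_dim5_Lee_form (b : ℝ → ℝ) (hb : ContDiff ℝ (⊤ : ℕ∞) b) :
    (∀ p, ∀ v : Fin 2 → (Fin 5 → ℝ), extDer Set.univ (omega5 b) p v = 0) ∧
    (∀ p, ∀ v : Fin 2 → (Fin 5 → ℝ), extDer Set.univ eta5 p v = 0) ∧
    (∀ p, wedge (omega5 b p) (eta5 p) = 0) ∧
    (∀ p, ∀ v : Fin 3 → (Fin 5 → ℝ),
      extDer Set.univ Phi5 p v =
        ((2 * f5 b p) • wedge (eta5 p) (Phi5 p) +
          (2 : ℝ) • wedge (omega5 b p) (Phi5 p)) v) ∧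
    (∀ p, ∀ X : Fin 5 → ℝ,
      fderiv ℝ (f5 b) p X + f5 b p * omega5 b p ![X] = lam5 b p * eta5 p ![X]) ∧
    (∀ p, omega5 b p = b (p 3) • eta5 p) ∧
    (∀ p, b (p 3) ≠ 0 → ∃ v : Fin 3 → (Fin 5 → ℝ),
      extDer Set.univ Phi5 p v ≠ ((2 * f5 b p) • wedge (eta5 p) (Phi5 p)) v) := by
  have hbd : Differentiable ℝ b := hb.differentiable (by simp)
  -- derivative of q ↦ b (q 3) * c
  have hc : ∀ (p : Fin 5 → ℝ) (c : ℝ) (X : Fin 5 → ℝ),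
      fderivWithin ℝ (fun q : Fin 5 → ℝ => b (q 3) * c) Set.univ p X
        = deriv b (p 3) * c * X 3 := by
    intro p c X
    have h := fd_proj3 (g := fun t => b t * c) ((hbd (p 3)).mul_const c) X
    rwa [deriv_mul_const (hbd (p 3))] at h
  -- derivative of q ↦ -exp (q 3) * c
  have hexp : ∀ (p : Fin 5 → ℝ) (c : ℝ) (X : Fin 5 → ℝ),
      fderivWithin ℝ (fun q : Fin 5 → ℝ => -Real.exp (q 3) * c) Set.univ p X
        = -Real.exp (p 3) * c * X 3 := by
    intro p c X
    have hg : DifferentiableAt ℝ (fun t : ℝ => -Real.exp t * c) (p 3) :=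
      ((Real.differentiable_exp (p 3)).neg).mul_const c
    have hd : deriv (fun t : ℝ => -Real.exp t * c) (p 3) = -Real.exp (p 3) * c := by
      rw [deriv_mul_const (c := fun t => -Real.exp t) (Real.differentiable_exp (p 3)).neg]
      simp [Real.deriv_exp]
    have h := fd_proj3 hg X
    rwa [hd] at h
  have s00 : (0 : Fin 3).succAbove 0 = 1 := by decide
  have s01 : (0 : Fin 3).succAbove 1 = 2 := by decide
  have s10 : (1 : Fin 3).succAbove 0 = 0 := by decide
  have s11 : (1 : Fin 3).succAbove 1 = 2 := by decide
  have s20 : (2 : Fin 3).succAbove 0 = 0 := by decide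
  have s21 : (2 : Fin 3).succAbove 1 = 1 := by decide
  -- the exterior derivative of Phi5, fully evaluated
  have hdPhi : ∀ (p : Fin 5 → ℝ) (v : Fin 3 → (Fin 5 → ℝ)),
      extDer Set.univ Phi5 p v =
        -Real.exp (p 3) *
            ((v 1 0 * v 2 1 - v 2 0 * v 1 1) + (v 1 4 * v 2 2 - v 2 4 * v 1 2)) * v 0 3
        - (-Real.exp (p 3) *
            ((v 0 0 * v 2 1 - v 2 0 * v 0 1) + (v 0 4 * v 2 2 - v 2 4 * v 0 2)) * v 1 3)
        + -Real.exp (p 3) *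
            ((v 0 0 * v 1 1 - v 1 0 * v 0 1) + (v 0 4 * v 1 2 - v 1 4 * v 0 2)) * v 2 3 := by
    intro p v
    unfold extDer
    simp only [Phi5_apply]
    rw [Fin.sum_univ_three]
    simp only [s00, s01, s10, s11, s20, s21, hexp]
    norm_num
    try ring
  -- the right-hand side of the structure equation, fully evaluated
  have hW : ∀ (p : Fin 5 → ℝ) (c : ℝ) (a : (Fin 5 → ℝ) [⋀^Fin 1]→ₗ[ℝ] ℝ)
      (v : Fin 3 → (Fin 5 → ℝ)),
      wedge a (Phi5 p) v =
        a ![v 0] * Phi5 p ![v 1, v 2] - a ![v 1] * Phi5 p ![v 0, v 2]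
          + a ![v 2] * Phi5 p ![v 0, v 1] := fun p c a v => wedge_oneForm_two a (Phi5 p) v
  refine ⟨?_, ?_, ?_, ?_, ?_, fun p => rfl, ?_⟩
  · -- dω = 0
    intro p v
    unfold extDer
    simp only [omega5_apply]
    rw [Fin.sum_univ_two]
    simp only [hc]
    norm_num
    try ring
  · -- dη = 0
    intro p v
    unfold extDer
    simp only [eta5_apply]
    simp [fderivWithin_univ]
  · -- ω ∧ η = 0
    intro p
    ext v
    rw [wedge_oneForm_oneForm]
    simp only [omega5_apply, eta5_apply, Matrix.cons_val_zero, AlternatingMap.zero_apply]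
    ring
  · -- dΦ = 2f η∧Φ + 2 ω∧Φ
    intro p v
    rw [hdPhi]
    simp only [AlternatingMap.add_apply, AlternatingMap.smul_apply, smul_eq_mul,
      hW p 0, eta5_apply, omega5_apply, Phi5_apply, Matrix.cons_val_zero,
      Matrix.cons_val_one, Matrix.head_cons, f5]
    ring
  · -- df + f ω = λ η
    intro p X
    have hdf : fderiv ℝ (f5 b) p X = -deriv b (p 3) * X 3 := by
      rw [← fderivWithin_univ]
      have h := fd_proj3 (g := fun t => 1 / 2 - b t)
        ((differentiableAt_const _).sub (hbd (p 3))) X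
      rw [show f5 b = fun q : Fin 5 → ℝ => 1 / 2 - b (q 3) from rfl]
      rw [h, deriv_const_sub]
    rw [hdf]
    simp only [omega5_apply, eta5_apply, lam5, f5, Matrix.cons_val_zero]
    ring
  · -- non-cosymplectic where b ≠ 0
    intro p hB
    refine ⟨![![0,0,0,1,0], ![1,0,0,0,0], ![0,1,0,0,0]], ?_⟩
    rw [hdPhi]
    simp only [AlternatingMap.smul_apply, smul_eq_mul, hW p 0, eta5_apply, Phi5_apply,
      Matrix.cons_val_zero, Matrix.cons_val_one, Matrix.head_cons, f5]
    norm_num [Matrix.cons_val_two, Matrix.cons_val_three, Matrix.cons_val_four,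
      Matrix.vecTail, Matrix.vecHead]
    intro heq
    exact hB (by linarith)
end
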